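/- Let N ≥ 1, fix a > a_{q*}, and for 0 < q < q* near q* let u_q be a nonnegative minimizer of \tilde d_a(q). Then ∫_{ℝ^N}|∇u_q|²dx / ∫_{ℝ^N}|∇(u_q²)|²dx → 0 as q ↗ q*. -/

import Mathlib

/-!
A minimizer cannot lower its energy under the mass-preserving rescaling `u ↦ s^N u(s² ·)`, which
multiplies `∫|∇u|²`, `∫|∇(u²)|²` and `∫|u|^(q+2)` by `t²`, `t^(N+2)` and `t^(Nq/2)` (`t = s²`).
Comparing `u` with its rescalings by `s = 2` and `s = 1/2` and eliminating the last integral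
bounds `∫|∇u|²` by `∫|∇(u²)|²` times a factor proportional to `4^(N+2) - 2^(Nq)`, the gap between
the last two scaling exponents, which closes as `q ↗ q* = 2 + 4/N`.
-/

open MeasureTheory Filter Topology Metric

noncomputable section

/-- Condition (V): `V` is a locally bounded nonnegative (measurable) potential with
`inf V = 0` and `V(x) → ∞` as `|x| → ∞`. -/
def CondV (N : ℕ) (V : EuclideanSpace ℝ (Fin N) → ℝ) : Prop :=
  Measurable V ∧ (∀ x, 0 ≤ V x) ∧
  (∀ R : ℝ, ∃ C : ℝ, ∀ x : EuclideanSpace ℝ (Fin N), ‖x‖ ≤ R → V x ≤ C) ∧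
  (∀ ε : ℝ, 0 < ε → ∃ x, V x < ε) ∧
  Tendsto V (cocompact (EuclideanSpace ℝ (Fin N))) atTop

/-- Membership in the space `H`. -/
def InH (N : ℕ) (V u : EuclideanSpace ℝ (Fin N) → ℝ) : Prop :=
  Differentiable ℝ u ∧ MemLp u 2 volume ∧
  Integrable (fun x => ‖fderiv ℝ u x‖ ^ 2 + V x * u x ^ 2)

/-- Membership in the space `X`. -/
def InX (N : ℕ) (V u : EuclideanSpace ℝ (Fin N) → ℝ) : Prop :=
  InH N V u ∧ Integrable (fun x => ‖fderiv ℝ (fun y => u y ^ 2) x‖ ^ 2)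

/-- The critical exponent `q* = 2 + 4/N`. -/
def qstar (N : ℕ) : ℝ := 2 + 4 / N

/-- The energy functional `E_q^a`. -/
def energy (N : ℕ) (V : EuclideanSpace ℝ (Fin N) → ℝ) (a q : ℝ)
    (u : EuclideanSpace ℝ (Fin N) → ℝ) : ℝ :=
  (1 / 2) * (∫ x, (‖fderiv ℝ u x‖ ^ 2 + V x * u x ^ 2))
    + (1 / 4) * (∫ x, ‖fderiv ℝ (fun y => u y ^ 2) x‖ ^ 2)
    - (a / (q + 2)) * (∫ x, |u x| ^ (q + 2))

/-- `u` is a minimizer for `d_a(q)`. -/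
def IsMinimizer (N : ℕ) (V : EuclideanSpace ℝ (Fin N) → ℝ) (a q : ℝ)
    (u : EuclideanSpace ℝ (Fin N) → ℝ) : Prop :=
  InX N V u ∧ (∫ x, u x ^ 2) = 1 ∧
  ∀ w, InX N V w → (∫ x, w x ^ 2) = 1 → energy N V a q u ≤ energy N V a q w

/-- `d_a(q)`, as the infimum of the energy over the constraint manifold. -/
def dval (N : ℕ) (V : EuclideanSpace ℝ (Fin N) → ℝ) (a q : ℝ) : ℝ :=
  sInf {r : ℝ | ∃ u, InX N V u ∧ (∫ x, u x ^ 2) = 1 ∧ energy N V a q u = r}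

/-- The pointwise Laplacian. -/
def lap (N : ℕ) (u : EuclideanSpace ℝ (Fin N) → ℝ) (x : EuclideanSpace ℝ (Fin N)) : ℝ :=
  ∑ i : Fin N, fderiv ℝ (fun y => fderiv ℝ u y (EuclideanSpace.single i 1)) x
    (EuclideanSpace.single i 1)

/-- `v` is the nonnegative radially symmetric (compactly supported) solution of
`-Δv + 1 = v^(q/2)`, i.e. a solution of the associated Dirichlet–Neumann free
boundary problem on a ball. -/
def IsGroundState (N : ℕ) (q : ℝ) (v : EuclideanSpace ℝ (Fin N) → ℝ) : Prop :=
  (∀ x, 0 ≤ v x) ∧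
  (∀ x y : EuclideanSpace ℝ (Fin N), ‖x‖ = ‖y‖ → v x = v y) ∧
  Integrable v ∧ ContDiff ℝ 1 v ∧
  ∃ R : ℝ, 0 < R ∧
    (∀ x : EuclideanSpace ℝ (Fin N), ‖x‖ < R → 0 < v x) ∧
    (∀ x : EuclideanSpace ℝ (Fin N), R ≤ ‖x‖ → v x = 0) ∧
    (∀ x : EuclideanSpace ℝ (Fin N), ‖x‖ = R → fderiv ℝ v x = 0) ∧
    ContDiffOn ℝ 2 v (Metric.ball 0 R) ∧
    (∀ x : EuclideanSpace ℝ (Fin N), ‖x‖ < R → -lap N v x + 1 = v x ^ (q / 2))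

/-- `θ_q`. -/
def thetaQ (N : ℕ) (q : ℝ) : ℝ := 2 * q * N / ((q + 2) * ((N : ℝ) + 2))

/-- `λ_q`. -/
def lambdaQ (N : ℕ) (q : ℝ) : ℝ :=
  (1 - thetaQ N q) * (thetaQ N q / (1 - thetaQ N q)) ^ (q * N / (2 * ((N : ℝ) + 2)))

/-- `a_q = ‖v_q‖_{L¹}^{q/(N+2)}`. -/
def aQ (N : ℕ) (q : ℝ) (v : EuclideanSpace ℝ (Fin N) → ℝ) : ℝ :=
  (∫ x, |v x|) ^ (q / ((N : ℝ) + 2))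

/-- `a_{q*} = ‖v_{q*}‖_{L¹}^{2/N}`. -/
def aStar (N : ℕ) (v : EuclideanSpace ℝ (Fin N) → ℝ) : ℝ :=
  (∫ x, |v x|) ^ ((2 : ℝ) / N)

/-- Membership in `H¹ ∩ {∇(u²) ∈ L²}` (for the potential-free problem). -/
def InXfree (N : ℕ) (u : EuclideanSpace ℝ (Fin N) → ℝ) : Prop :=
  Differentiable ℝ u ∧ MemLp u 2 volume ∧
  Integrable (fun x => ‖fderiv ℝ u x‖ ^ 2) ∧
  Integrable (fun x => ‖fderiv ℝ (fun y => u y ^ 2) x‖ ^ 2)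

/-- The potential-free energy functional `Ẽ_q^a`. -/
def energyFree (N : ℕ) (a q : ℝ) (u : EuclideanSpace ℝ (Fin N) → ℝ) : ℝ :=
  (1 / 2) * (∫ x, ‖fderiv ℝ u x‖ ^ 2)
    + (1 / 4) * (∫ x, ‖fderiv ℝ (fun y => u y ^ 2) x‖ ^ 2)
    - (a / (q + 2)) * (∫ x, |u x| ^ (q + 2))

/-- `u` is a minimizer for `d̃_a(q)`. -/
def IsMinimizerFree (N : ℕ) (a q : ℝ) (u : EuclideanSpace ℝ (Fin N) → ℝ) : Prop :=
  InXfree N u ∧ (∫ x, u x ^ 2) = 1 ∧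
  ∀ w, InXfree N w → (∫ x, w x ^ 2) = 1 → energyFree N a q u ≤ energyFree N a q w

/-- `d̃_a(q)`. -/
def dvalFree (N : ℕ) (a q : ℝ) : ℝ :=
  sInf {r : ℝ | ∃ u, InXfree N u ∧ (∫ x, u x ^ 2) = 1 ∧ energyFree N a q u = r}

/-- Membership in `D^{2,1}(ℝ^N)`. -/
def InD21 (N : ℕ) (u : EuclideanSpace ℝ (Fin N) → ℝ) : Prop :=
  Differentiable ℝ u ∧ Integrable u ∧ Integrable (fun x => ‖fderiv ℝ u x‖ ^ 2)

/-- The auxiliary functional `F`. -/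
def Ffun (N : ℕ) (astar : ℝ) (u : EuclideanSpace ℝ (Fin N) → ℝ) : ℝ :=
  (∫ x, ‖fderiv ℝ u x‖ ^ 2)
    - ((N : ℝ) * astar / ((N : ℝ) + 1)) * (∫ x, |u x| ^ ((2 : ℝ) + 2 / N))

/-- `u` is a minimizer of the auxiliary problem `m(c)`. -/
def IsMinF (N : ℕ) (astar c : ℝ) (u : EuclideanSpace ℝ (Fin N) → ℝ) : Prop :=
  InD21 N u ∧ (∫ x, |u x|) = c ∧
  ∀ w, InD21 N w → (∫ x, |w x|) = c → Ffun N astar u ≤ Ffun N astar w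

/-- `t_q`, the leading blow-up rate. -/
def tQ (N : ℕ) (a q : ℝ) (v : EuclideanSpace ℝ (Fin N) → ℝ) : ℝ :=
  (4 * a * q / (qstar N * lambdaQ N q * aQ N q v * (q + 2))) ^ (qstar N / (qstar N - q))

/-- `ε_q = t_q^{-1/(N+2)}`. -/
def epsQ (N : ℕ) (a q : ℝ) (v : EuclideanSpace ℝ (Fin N) → ℝ) : ℝ :=
  (4 * a * q / (qstar N * lambdaQ N q * aQ N q v * (q + 2))) ^ (-(2 / ((N : ℝ) * (qstar N - q))))

section Rescaling

variable {N : ℕ}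

lemma fderiv_const_mul_comp_smul {E : Type*} [NormedAddCommGroup E] [NormedSpace ℝ E]
    {g : E → ℝ} (hg : Differentiable ℝ g) (k c : ℝ) (x : E) :
    fderiv ℝ (fun y => k * g (c • y)) x = (k * c) • fderiv ℝ g (c • x) := by
  have hgc : DifferentiableAt ℝ (fun y => g (c • y)) x :=
    (hg _).comp x (differentiableAt_id.const_smul c)
  rw [fderiv_const_mul hgc, fderiv_comp_smul, smul_smul]

lemma integral_comp_smul_euclideanSpace (g : EuclideanSpace ℝ (Fin N) → ℝ) {c : ℝ}
    (hc : 0 ≤ c) : ∫ x, g (c • x) = (c ^ N)⁻¹ * ∫ x, g x := by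
  simpa using Measure.integral_comp_smul_of_nonneg volume g c (hR := hc)

lemma integral_norm_fderiv_sq_const_mul_comp_smul {g : EuclideanSpace ℝ (Fin N) → ℝ}
    (hg : Differentiable ℝ g) (k : ℝ) {c : ℝ} (hc : 0 ≤ c) :
    ∫ x, ‖fderiv ℝ (fun y => k * g (c • y)) x‖ ^ 2
      = (k * c) ^ 2 * (c ^ N)⁻¹ * ∫ x, ‖fderiv ℝ g x‖ ^ 2 := by
  simp_rw [fderiv_const_mul_comp_smul hg, norm_smul, mul_pow, Real.norm_eq_abs, sq_abs]
  rw [integral_const_mul,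
    integral_comp_smul_euclideanSpace (fun x => ‖fderiv ℝ g x‖ ^ 2) hc]
  ring

lemma MeasureTheory.Integrable.norm_fderiv_sq_const_mul_comp_smul
    {g : EuclideanSpace ℝ (Fin N) → ℝ} (hg : Differentiable ℝ g) (hint : Integrable fun x => ‖fderiv ℝ g x‖ ^ 2) (k : ℝ) {c : ℝ}
    (hc : c ≠ 0) : Integrable fun x => ‖fderiv ℝ (fun y => k * g (c • y)) x‖ ^ 2 := by
  simp_rw [fderiv_const_mul_comp_smul hg, norm_smul, mul_pow]
  exact (hint.comp_smul hc).const_mul _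

end Rescaling

def dilate (N : ℕ) (s : ℝ) (u : EuclideanSpace ℝ (Fin N) → ℝ) :
    EuclideanSpace ℝ (Fin N) → ℝ :=
  fun x => s ^ N * u (s ^ 2 • x)

section Dilate

variable {N : ℕ} {s : ℝ} {u : EuclideanSpace ℝ (Fin N) → ℝ}

lemma sq_dilate :
    (fun x => dilate N s u x ^ 2) = fun x => (s ^ N) ^ 2 * (fun y => u y ^ 2) (s ^ 2 • x) := by
  ext x
  simp only [dilate]
  ring

lemma integral_sq_dilate (hs : 0 < s) : ∫ x, dilate N s u x ^ 2 = ∫ x, u x ^ 2 := by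
  rw [sq_dilate, integral_const_mul,
    integral_comp_smul_euclideanSpace (fun y => u y ^ 2) (by positivity),
    ← pow_mul, ← pow_mul, mul_comm 2 N, ← mul_assoc, mul_inv_cancel₀ (by positivity), one_mul]

lemma integral_norm_fderiv_dilate_sq (hu : Differentiable ℝ u) (hs : 0 < s) :
    ∫ x, ‖fderiv ℝ (dilate N s u) x‖ ^ 2 = (s ^ 2) ^ 2 * ∫ x, ‖fderiv ℝ u x‖ ^ 2 := by
  refine (integral_norm_fderiv_sq_const_mul_comp_smul hu _ (by positivity)).trans ?_
  congr 1
  field_simp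
  ring

lemma integral_norm_fderiv_sq_dilate_sq (hu : Differentiable ℝ u) (hs : 0 < s) :
    ∫ x, ‖fderiv ℝ (fun y => dilate N s u y ^ 2) x‖ ^ 2
      = (s ^ 2) ^ (N + 2) * ∫ x, ‖fderiv ℝ (fun y => u y ^ 2) x‖ ^ 2 := by
  rw [sq_dilate, integral_norm_fderiv_sq_const_mul_comp_smul (g := fun y => u y ^ 2) (hu.pow 2) _
    (by positivity)]
  congr 1
  field_simp
  ring

lemma integral_abs_rpow_dilate (hs : 0 < s) (q : ℝ) :
    ∫ x, |dilate N s u x| ^ (q + 2) = (s ^ N) ^ q * ∫ x, |u x| ^ (q + 2) := by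
  have hsN : 0 < s ^ N := by positivity
  simp_rw [dilate, abs_mul, abs_of_pos hsN, Real.mul_rpow hsN.le (abs_nonneg _)]
  rw [integral_const_mul,
    integral_comp_smul_euclideanSpace (fun y => |u y| ^ (q + 2)) (by positivity), ← mul_assoc,
    Real.rpow_add hsN, ← pow_mul, mul_comm 2 N, pow_mul]
  norm_cast
  field_simp

lemma InXfree.dilate (hu : InXfree N u) (hs : 0 < s) : InXfree N (_root_.dilate N s u) := by
  obtain ⟨hdiff, hL2, hgrad, hgrad2⟩ := hu
  have hc : s ^ 2 ≠ 0 := by positivity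
  have hdiff' : Differentiable ℝ (_root_.dilate N s u) :=
    (hdiff.comp (differentiable_id.const_smul (s ^ 2))).const_mul (s ^ N)
  refine ⟨hdiff', ?_, hgrad.norm_fderiv_sq_const_mul_comp_smul hdiff _ hc, ?_⟩
  · rw [memLp_two_iff_integrable_sq hdiff'.continuous.aestronglyMeasurable, sq_dilate]
    exact (((memLp_two_iff_integrable_sq hdiff.continuous.aestronglyMeasurable).1 hL2).comp_smul
      hc).const_mul _
  · rw [sq_dilate]
    exact hgrad2.norm_fderiv_sq_const_mul_comp_smul (g := fun y => u y ^ 2) (hdiff.pow 2) _ hc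

lemma energyFree_dilate (hu : Differentiable ℝ u) (hs : 0 < s) (a q : ℝ) :
    energyFree N a q (dilate N s u) =
      1 / 2 * ((s ^ 2) ^ 2 * ∫ x, ‖fderiv ℝ u x‖ ^ 2)
        + 1 / 4 * ((s ^ 2) ^ (N + 2) * ∫ x, ‖fderiv ℝ (fun y => u y ^ 2) x‖ ^ 2)
        - a / (q + 2) * ((s ^ N) ^ q * ∫ x, |u x| ^ (q + 2)) := by
  rw [energyFree, integral_norm_fderiv_dilate_sq hu hs, integral_norm_fderiv_sq_dilate_sq hu hs,
    integral_abs_rpow_dilate hs]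

end Dilate

lemma IsMinimizerFree.energyFree_le_dilate {N : ℕ} {a q s : ℝ}
    {u : EuclideanSpace ℝ (Fin N) → ℝ} (hm : IsMinimizerFree N a q u) (hs : 0 < s) :
    energyFree N a q u ≤ energyFree N a q (dilate N s u) :=
  hm.2.2 _ (hm.1.dilate hs) ((integral_sq_dilate hs).trans hm.2.1)

/-- Eliminates `D` between the comparisons of `T A/2 + P B/4 - X D` at scale `1` with the scales
`t` and `1/t`, where `T, P, X` are powers of `t`. -/
lemma le_of_energy_le_rescalings {A B D T X P : ℝ} (hT : 0 < T) (hX : 0 < X) (hP : 0 < P)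
    (hup : 1 / 2 * A + 1 / 4 * B - D ≤ 1 / 2 * (T * A) + 1 / 4 * (P * B) - X * D)
    (hdown : 1 / 2 * A + 1 / 4 * B - D ≤ 1 / 2 * (T⁻¹ * A) + 1 / 4 * (P⁻¹ * B) - X⁻¹ * D) :
    (1 - T⁻¹) * (X - T) / 2 * A ≤ (1 - P⁻¹) * (P - X) / 4 * B := by
  have hTT : T⁻¹ * T = 1 := inv_mul_cancel₀ hT.ne'
  have hPP : P⁻¹ * P = 1 := inv_mul_cancel₀ hP.ne'
  have hXX : X * X⁻¹ = 1 := mul_inv_cancel₀ hX.ne'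
  linear_combination hup + X * hdown + (A / 2) * hTT + (B / 4) * hPP - D * hXX

lemma IsMinimizerFree.integral_norm_fderiv_sq_le {N : ℕ} {a q s : ℝ}
    {u : EuclideanSpace ℝ (Fin N) → ℝ} (hm : IsMinimizerFree N a q u) (hs : 0 < s) :
    (1 - ((s ^ 2) ^ 2)⁻¹) * ((s ^ N) ^ q - (s ^ 2) ^ 2) / 2 * ∫ x, ‖fderiv ℝ u x‖ ^ 2
      ≤ (1 - ((s ^ 2) ^ (N + 2))⁻¹) * ((s ^ 2) ^ (N + 2) - (s ^ N) ^ q) / 4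
        * ∫ x, ‖fderiv ℝ (fun y => u y ^ 2) x‖ ^ 2 := by
  have hup := hm.energyFree_le_dilate hs
  have hdown := hm.energyFree_le_dilate (inv_pos.2 hs)
  rw [energyFree_dilate hm.1.1 hs] at hup
  rw [energyFree_dilate hm.1.1 (inv_pos.2 hs), inv_pow, inv_pow, inv_pow, inv_pow,
    Real.inv_rpow (by positivity)] at hdown
  rw [energyFree] at hup hdown
  exact le_of_energy_le_rescalings (D := a / (q + 2) * ∫ x, |u x| ^ (q + 2))
    (by positivity) (by positivity) (by positivity) (by linear_combination hup)
    (by linear_combination hdown)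

def rescalingRatioBound (N : ℕ) (s q : ℝ) : ℝ :=
  (1 - ((s ^ 2) ^ (N + 2))⁻¹) * ((s ^ 2) ^ (N + 2) - (s ^ N) ^ q) / 4 /
    ((1 - ((s ^ 2) ^ 2)⁻¹) * ((s ^ N) ^ q - (s ^ 2) ^ 2) / 2)

lemma IsMinimizerFree.gradient_ratio_le {N : ℕ} {a q s : ℝ} {u : EuclideanSpace ℝ (Fin N) → ℝ}
    (hm : IsMinimizerFree N a q u) (hs : 1 < s) (hTX : (s ^ 2) ^ 2 < (s ^ N) ^ q)
    (hXP : (s ^ N) ^ q ≤ (s ^ 2) ^ (N + 2)) :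
    (∫ x, ‖fderiv ℝ u x‖ ^ 2) / (∫ x, ‖fderiv ℝ (fun y => u y ^ 2) x‖ ^ 2)
      ≤ rescalingRatioBound N s q := by
  have hT : 1 < (s ^ 2) ^ 2 := one_lt_pow₀ (one_lt_pow₀ hs two_ne_zero) two_ne_zero
  have hP : 1 ≤ (s ^ 2) ^ (N + 2) := one_le_pow₀ (one_le_pow₀ hs.le)
  have hden : 0 < (1 - ((s ^ 2) ^ 2)⁻¹) * ((s ^ N) ^ q - (s ^ 2) ^ 2) / 2 :=
    div_pos (mul_pos (sub_pos.2 (inv_lt_one_of_one_lt₀ hT)) (sub_pos.2 hTX)) two_pos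
  have hnum : 0 ≤ (1 - ((s ^ 2) ^ (N + 2))⁻¹) * ((s ^ 2) ^ (N + 2) - (s ^ N) ^ q) / 4 :=
    div_nonneg (mul_nonneg (sub_nonneg.2 (inv_le_one_of_one_le₀ hP)) (sub_nonneg.2 hXP))
      zero_le_four
  refine div_le_of_le_mul₀ (integral_nonneg fun _ => by positivity) (div_nonneg hnum hden.le) ?_
  rw [rescalingRatioBound, div_mul_eq_mul_div, le_div_iff₀ hden, mul_comm]
  exact hm.integral_norm_fderiv_sq_le (zero_lt_one.trans hs)

section Critical

variable {N : ℕ} {s : ℝ}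

lemma rpow_qstar (hN : N ≠ 0) (hs : 0 ≤ s) : (s ^ N) ^ qstar N = (s ^ 2) ^ (N + 2) := by
  have hNq : (N : ℝ) * qstar N = ((2 * (N + 2) : ℕ) : ℝ) := by
    rw [qstar]
    push_cast
    field_simp
    ring
  rw [← Real.rpow_natCast_mul hs, hNq, Real.rpow_natCast, pow_mul]

lemma rpow_le_of_le_qstar (hN : N ≠ 0) (hs : 1 ≤ s) {q : ℝ} (hq : q ≤ qstar N) :
    (s ^ N) ^ q ≤ (s ^ 2) ^ (N + 2) :=
  rpow_qstar hN (zero_le_one.trans hs) ▸ Real.rpow_le_rpow_of_exponent_le (one_le_pow₀ hs) hq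

lemma tendsto_rpow_nhds_qstar (hN : N ≠ 0) (hs : 0 < s) :
    Tendsto (fun q => (s ^ N) ^ q) (𝓝 (qstar N)) (𝓝 ((s ^ 2) ^ (N + 2))) :=
  rpow_qstar hN hs.le ▸ (Real.continuousAt_const_rpow (pow_pos hs N).ne').tendsto

lemma sq_sq_lt_pow_add_two (hN : N ≠ 0) (hs : 1 < s) : (s ^ 2) ^ 2 < (s ^ 2) ^ (N + 2) :=
  pow_lt_pow_right₀ (one_lt_pow₀ hs two_ne_zero) (by omega)

lemma tendsto_rescalingRatioBound (hN : N ≠ 0) (hs : 1 < s) :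
    Tendsto (rescalingRatioBound N s) (𝓝 (qstar N)) (𝓝 0) := by
  have hX := tendsto_rpow_nhds_qstar hN (zero_lt_one.trans hs)
  have hT : 1 < (s ^ 2) ^ 2 := one_lt_pow₀ (one_lt_pow₀ hs two_ne_zero) two_ne_zero
  have hden : (1 - ((s ^ 2) ^ 2)⁻¹) * ((s ^ 2) ^ (N + 2) - (s ^ 2) ^ 2) / 2 ≠ 0 :=
    (div_pos (mul_pos (sub_pos.2 (inv_lt_one_of_one_lt₀ hT))
      (sub_pos.2 (sq_sq_lt_pow_add_two hN hs))) two_pos).ne'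
  have h := ((((tendsto_const_nhds (x := (s ^ 2) ^ (N + 2))).sub hX).const_mul
    (1 - ((s ^ 2) ^ (N + 2))⁻¹)).div_const 4).div
    (((hX.sub tendsto_const_nhds).const_mul _).div_const 2) hden
  rwa [sub_self, mul_zero, zero_div, zero_div] at h

end Critical

theorem free_minimizers_gradient_ratio_vanishes_general
    (N : ℕ) (hN : 1 ≤ N)
    (a : ℝ)
    (u : ℝ → EuclideanSpace ℝ (Fin N) → ℝ)
    (hu : ∀ᶠ q in 𝓝[<] qstar N, (∀ x, 0 ≤ u q x) ∧ IsMinimizerFree N a q (u q)) :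
    Tendsto (fun q => (∫ x, ‖fderiv ℝ (u q) x‖ ^ 2) /
      (∫ x, ‖fderiv ℝ (fun y => u q y ^ 2) x‖ ^ 2)) (𝓝[<] qstar N) (𝓝 0) := by
  have hN0 : N ≠ 0 := Nat.one_le_iff_ne_zero.1 hN
  have hTX : ∀ᶠ q in 𝓝[<] qstar N, ((2 : ℝ) ^ 2) ^ 2 < ((2 : ℝ) ^ N) ^ q :=
    nhdsWithin_le_nhds <| (tendsto_rpow_nhds_qstar hN0 two_pos).eventually
      (lt_mem_nhds (sq_sq_lt_pow_add_two hN0 one_lt_two))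
  refine squeeze_zero' (Eventually.of_forall fun q => div_nonneg
    (integral_nonneg fun _ => by positivity) (integral_nonneg fun _ => by positivity)) ?_
    ((tendsto_rescalingRatioBound hN0 one_lt_two).mono_left nhdsWithin_le_nhds)
  filter_upwards [hu, hTX, self_mem_nhdsWithin] with q huq hTXq hq
  exact huq.2.gradient_ratio_le one_lt_two hTXq (rpow_le_of_le_qstar hN0 one_le_two (le_of_lt hq))

/-- for fixed `a > a_{q*}` and nonnegative minimizers `u_q` of
`d̃_a(q)` (for `q` near `q*`), `∫|∇u_q|²/∫|∇(u_q²)|² → 0` as `q ↗ q*`. -/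
theorem free_minimizers_gradient_ratio_vanishes
    (N : ℕ) (hN : 1 ≤ N)
    (v : ℝ → EuclideanSpace ℝ (Fin N) → ℝ) (hv : ∀ q ∈ Set.Ioo (0 : ℝ) (qstar N), IsGroundState N q (v q))
    (vstar : EuclideanSpace ℝ (Fin N) → ℝ) (hvstar : IsGroundState N (qstar N) vstar)
    (a : ℝ) (ha : aStar N vstar < a)
    (u : ℝ → EuclideanSpace ℝ (Fin N) → ℝ)
    (hu : ∀ᶠ q in 𝓝[<] qstar N, (∀ x, 0 ≤ u q x) ∧ IsMinimizerFree N a q (u q)) :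
    Tendsto (fun q => (∫ x, ‖fderiv ℝ (u q) x‖ ^ 2) /
      (∫ x, ‖fderiv ℝ (fun y => u q y ^ 2) x‖ ^ 2)) (𝓝[<] qstar N) (𝓝 0) :=
  free_minimizers_gradient_ratio_vanishes_general N hN a u hu
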